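/- arXiv:2506.23805 — 3 statements merged into one kernel-verified Lean document; each statement's English description precedes it below -/
import Mathlib

section
/- Let R be a commutative ring in which 2 ≠ 0 and such that for every r ∈ R one has 2r = 0 if and only if r ∈ 2R (for example R = ℤ/4ℤ, or O/4O for the ring of integers O of a finite unramified extension of ℚ₂). Let G be a group and, for i = 1, 2, let Mᵢ = R × R be endowed with an R-linear G-action for which the submodule Lᵢ = R × {0} is G-stable, G acts on Lᵢ through a character aᵢ : G → Rˣ (i.e. g • (x, 0) = (aᵢ(g)·x, 0) for all x ∈ R), and G acts on the quotient Mᵢ/Lᵢ through a character dᵢ : G → Rˣ (i.e. the second coordinate of g • (x, y) is dᵢ(g)·y). Let φ : M₁ → M₂ be an R-linear G-equivariant bijection. If there exists σ₀ ∈ G with a₁(σ₀) = a₂(σ₀) = −1 and d₁(σ₀) = d₂(σ₀) = 1, then φ maps the set {m ∈ L₁ : 2m = 0} bijectively onto the set {m ∈ L₂ : 2m = 0}. -/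
/-!
Let `σ₀` act by `-1` on the line and trivially on the quotient. For an equivariant `φ`, the
second coordinate `v` of `φ (1, 0)` is then both fixed and negated by `σ₀`, so `2v = 0`. A
2-torsion point `(x, 0)` of the line has `x = 2s`, hence `φ (x, 0)` has second coordinate
`s · 2v = 0`; it is again 2-torsion because `φ` is linear. The same applies to `φ⁻¹`.
-/

namespace SelmerCompanion

def lineTwoTorsion (R : Type*) [CommRing R] : Set (R × R) :=
  {m | m.2 = 0 ∧ (2 : R) • m = 0}

section

variable {R : Type*} [CommRing R]

lemma two_mul_snd_apply_eq_zero {ψ s t : Module.End R (R × R)}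
    (hs : s (1, 0) = (-1, 0)) (ht : ∀ m, (t m).2 = m.2) (hψ : ∀ m, ψ (s m) = t (ψ m)) :
    2 * (ψ (1, 0)).2 = 0 := by
  have h := congrArg Prod.snd (hψ (1, 0))
  rw [hs, ht, show ((-1 : R), (0 : R)) = -(1, 0) by simp, map_neg, Prod.snd_neg] at h
  linear_combination -h

lemma mapsTo_lineTwoTorsion (hdiv : ∀ r : R, 2 * r = 0 → ∃ s : R, r = 2 * s)
    {ψ : Module.End R (R × R)} (hψ : 2 * (ψ (1, 0)).2 = 0) :
    Set.MapsTo ψ (lineTwoTorsion R) (lineTwoTorsion R) := by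
  rintro ⟨x, y⟩ ⟨rfl : y = 0, hx⟩
  obtain ⟨s, rfl⟩ := hdiv x (by simpa [two_mul] using congrArg Prod.fst hx)
  refine ⟨?_, by rw [← map_smul, hx, map_zero]⟩
  rw [show ((2 * s : R), (0 : R)) = (2 * s) • (1, 0) by simp, map_smul, Prod.smul_snd,
    smul_eq_mul, mul_comm 2 s, mul_assoc, hψ, mul_zero]

end

theorem statement0_general (R : Type) [CommRing R] (G : Type) [Group G]
    (hdiv : ∀ r : R, 2 * r = 0 ↔ ∃ s : R, r = 2 * s)
    (ρ₁ ρ₂ : Representation R G (R × R))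
    (a₁ a₂ d₁ d₂ : G →* Rˣ)
    (hL₁ : ∀ (g : G) (x : R), ρ₁ g (x, 0) = ((a₁ g : R) * x, 0))
    (hL₂ : ∀ (g : G) (x : R), ρ₂ g (x, 0) = ((a₂ g : R) * x, 0))
    (hd₁ : ∀ (g : G) (m : R × R), (ρ₁ g m).2 = (d₁ g : R) * m.2)
    (hd₂ : ∀ (g : G) (m : R × R), (ρ₂ g m).2 = (d₂ g : R) * m.2)
    (φ : (R × R) ≃ₗ[R] (R × R))
    (hφ : ∀ (g : G) (m : R × R), φ (ρ₁ g m) = ρ₂ g (φ m))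
    (σ₀ : G)
    (ha₁ : (a₁ σ₀ : R) = -1) (ha₂ : (a₂ σ₀ : R) = -1)
    (hd₁σ : (d₁ σ₀ : R) = 1) (hd₂σ : (d₂ σ₀ : R) = 1) :
    Set.BijOn φ {m : R × R | m.2 = 0 ∧ (2 : R) • m = 0}
      {m : R × R | m.2 = 0 ∧ (2 : R) • m = 0} := by
  have hs₁ : ρ₁ σ₀ (1, 0) = (-1, 0) := by rw [hL₁, ha₁, mul_one]
  have hs₂ : ρ₂ σ₀ (1, 0) = (-1, 0) := by rw [hL₂, ha₂, mul_one]
  have ht₁ (m : R × R) : (ρ₁ σ₀ m).2 = m.2 := by rw [hd₁, hd₁σ, one_mul]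
  have ht₂ (m : R × R) : (ρ₂ σ₀ m).2 = m.2 := by rw [hd₂, hd₂σ, one_mul]
  have hφsymm (m : R × R) : φ.symm (ρ₂ σ₀ m) = ρ₁ σ₀ (φ.symm m) := by
    rw [φ.symm_apply_eq, hφ, φ.apply_symm_apply]
  have hdiv' (r : R) := (hdiv r).mp
  exact φ.toEquiv.bijOn'
    (mapsTo_lineTwoTorsion (ψ := φ.toLinearMap) hdiv'
      (two_mul_snd_apply_eq_zero hs₁ ht₂ (hφ σ₀)))
    (mapsTo_lineTwoTorsion (ψ := φ.symm.toLinearMap) hdiv'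
      (two_mul_snd_apply_eq_zero hs₂ ht₁ hφsymm))

/-- Module-theoretic core of Lemma 3.5 (preservation of the 2-ordinary filtration).
Let `R` be a commutative ring with `2 ≠ 0` in which `2r = 0 ↔ r ∈ 2R`.  For `i = 1, 2` let
`ρᵢ` be an `R`-linear `G`-action on `R × R` preserving the line `L = R × {0}`, acting on `L`
through a character `aᵢ : G → Rˣ` and on the quotient through a character `dᵢ : G → Rˣ`.
If `φ` is an `R`-linear `G`-equivariant bijection and there is `σ₀ ∈ G` with
`a₁ σ₀ = a₂ σ₀ = -1` and `d₁ σ₀ = d₂ σ₀ = 1`, then `φ` maps `{m ∈ L : 2m = 0}` bijectively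
onto itself. -/
theorem statement0 (R : Type) [CommRing R] (G : Type) [Group G]
    (h2 : (2 : R) ≠ 0)
    (hdiv : ∀ r : R, 2 * r = 0 ↔ ∃ s : R, r = 2 * s)
    (ρ₁ ρ₂ : Representation R G (R × R))
    (a₁ a₂ d₁ d₂ : G →* Rˣ)
    (hL₁ : ∀ (g : G) (x : R), ρ₁ g (x, 0) = ((a₁ g : R) * x, 0))
    (hL₂ : ∀ (g : G) (x : R), ρ₂ g (x, 0) = ((a₂ g : R) * x, 0))
    (hd₁ : ∀ (g : G) (m : R × R), (ρ₁ g m).2 = (d₁ g : R) * m.2)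
    (hd₂ : ∀ (g : G) (m : R × R), (ρ₂ g m).2 = (d₂ g : R) * m.2)
    (φ : (R × R) ≃ₗ[R] (R × R))
    (hφ : ∀ (g : G) (m : R × R), φ (ρ₁ g m) = ρ₂ g (φ m))
    (σ₀ : G)
    (ha₁ : (a₁ σ₀ : R) = -1) (ha₂ : (a₂ σ₀ : R) = -1)
    (hd₁σ : (d₁ σ₀ : R) = 1) (hd₂σ : (d₂ σ₀ : R) = 1) :
    Set.BijOn φ {m : R × R | m.2 = 0 ∧ (2 : R) • m = 0}
      {m : R × R | m.2 = 0 ∧ (2 : R) • m = 0} :=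
  statement0_general R G hdiv ρ₁ ρ₂ a₁ a₂ d₁ d₂ hL₁ hL₂ hd₁ hd₂ φ hφ σ₀ ha₁ ha₂ hd₁σ hd₂σ

end SelmerCompanion
end

section
/- Let R be a commutative ring in which 2 ≠ 0 and such that for every r ∈ R one has 2r = 0 if and only if r ∈ 2R (for example R = ℤ/4ℤ). Let M₁ = M₂ = R × R and let τ : R × R → R × R be the R-linear involution τ(x, y) = (x, −y). If φ : M₁ → M₂ is an R-linear bijection satisfying φ ∘ τ = τ ∘ φ, then φ({(x, 0) : x ∈ R, 2x = 0}) = {(x, 0) : x ∈ R, 2x = 0} and φ({(0, y) : y ∈ R, 2y = 0}) = {(0, y) : y ∈ R, 2y = 0}. -/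
namespace SelmerCompanion

lemma key_aux (R : Type) [CommRing R]
    (hdiv : ∀ r : R, 2 * r = 0 ↔ ∃ s : R, r = 2 * s)
    (ψ : (R × R) ≃ₗ[R] (R × R))
    (hψ : ∀ m : R × R, ψ (m.1, -m.2) = ((ψ m).1, -(ψ m).2)) :
    (∀ m : R × R, (m.2 = 0 ∧ 2 * m.1 = 0) → ((ψ m).2 = 0 ∧ 2 * (ψ m).1 = 0)) ∧
    (∀ m : R × R, (m.1 = 0 ∧ 2 * m.2 = 0) → ((ψ m).1 = 0 ∧ 2 * (ψ m).2 = 0)) := by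
  set a := (ψ (1, 0)).1 with ha
  set b := (ψ (1, 0)).2 with hb
  set c := (ψ (0, 1)).1 with hc
  set d := (ψ (0, 1)).2 with hd
  have h1 : ψ (1, 0) = (a, b) := rfl
  have h2 : ψ (0, 1) = (c, d) := rfl
  -- 2b = 0
  have hb2 : 2 * b = 0 := by
    have := hψ (1, 0)
    simp only [neg_zero] at this
    have : b = -b := congrArg Prod.snd this
    linear_combination this
  -- 2c = 0
  have hc2 : 2 * c = 0 := by
    have h3 := hψ (0, 1)
    have h4 : ψ ((0 : R), (-1 : R)) = -ψ (0, 1) := by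
      have : ((0 : R), (-1 : R)) = -((0 : R), (1 : R)) := by simp
      rw [this, map_neg]
    rw [h4] at h3
    have : -c = c := congrArg Prod.fst h3
    linear_combination -this
  obtain ⟨b', hb'⟩ := (hdiv b).mp hb2
  obtain ⟨c', hc'⟩ := (hdiv c).mp hc2
  constructor
  · rintro ⟨x, y⟩ ⟨hy, hx⟩
    simp only at hy hx
    subst hy
    have hm : ψ (x, 0) = x • ψ (1, 0) := by
      rw [← map_smul]; congr 1; simp [Prod.smul_def, smul_eq_mul]
    rw [hm, h1]
    constructor
    · show x • b = 0
      rw [smul_eq_mul, hb']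
      ring_nf
      linear_combination b' * hx
    · show 2 * (x • a) = 0
      rw [smul_eq_mul]
      linear_combination a * hx
  · rintro ⟨x, y⟩ ⟨hx, hy⟩
    simp only at hy hx
    subst hx
    have hm : ψ (0, y) = y • ψ (0, 1) := by
      rw [← map_smul]; congr 1; simp [Prod.smul_def, smul_eq_mul]
    rw [hm, h2]
    constructor
    · show y • c = 0
      rw [smul_eq_mul, hc']
      linear_combination c' * hy
    · show 2 * (y • d) = 0
      rw [smul_eq_mul]
      linear_combination d * hy

/-- Module-theoretic core of Lemma 3.9 (the archimedean case).  Let `R` be a commutative ring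
with `2 ≠ 0` in which `2r = 0 ↔ r ∈ 2R`, and let `τ(x, y) = (x, -y)` on `R × R`.  Any
`R`-linear bijection `φ` of `R × R` commuting with `τ` preserves the 2-torsion of the
`+1`-eigenline `R × {0}` and of the `-1`-eigenline `{0} × R`. -/
theorem statement1 (R : Type) [CommRing R]
    (h2 : (2 : R) ≠ 0)
    (hdiv : ∀ r : R, 2 * r = 0 ↔ ∃ s : R, r = 2 * s)
    (φ : (R × R) ≃ₗ[R] (R × R))
    (hφ : ∀ m : R × R, φ (m.1, -m.2) = ((φ m).1, -(φ m).2)) :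
    φ '' {m : R × R | m.2 = 0 ∧ 2 * m.1 = 0} = {m : R × R | m.2 = 0 ∧ 2 * m.1 = 0} ∧
      φ '' {m : R × R | m.1 = 0 ∧ 2 * m.2 = 0} = {m : R × R | m.1 = 0 ∧ 2 * m.2 = 0} := by
  have hφs : ∀ m : R × R, φ.symm (m.1, -m.2) = ((φ.symm m).1, -(φ.symm m).2) := by
    intro m
    apply φ.injective
    rw [φ.apply_symm_apply, hφ (φ.symm m), φ.apply_symm_apply]
  obtain ⟨k1, k2⟩ := key_aux R hdiv φ hφ
  obtain ⟨k1', k2'⟩ := key_aux R hdiv φ.symm hφs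
  constructor
  · ext z
    constructor
    · rintro ⟨m, hm, rfl⟩
      exact k1 m hm
    · intro hz
      exact ⟨φ.symm z, k1' z hz, φ.apply_symm_apply z⟩
  · ext z
    constructor
    · rintro ⟨m, hm, rfl⟩
      exact k2 m hm
    · intro hz
      exact ⟨φ.symm z, k2' z hz, φ.apply_symm_apply z⟩

end SelmerCompanion
end

section
/- Let I be a group, ε : I → {±1} a surjective group homomorphism with kernel J, and A a 2-divisible abelian group (multiplication by 2 is surjective) on which I acts by g • a = ε(g)·a. Then I acts trivially on A[2], so H¹(I, A[2]) = Hom(I, A[2]), and under this identification the kernel of the natural map H¹(I, A[2]) → H¹(I, A) induced by the inclusion A[2] ↪ A is exactly the set of group homomorphisms I → A[2] that vanish on J (equivalently, the image of the inflation map from the order-2 quotient I/J). -/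
namespace SelmerCompanion

variable (G : Type) [Group G]

/-- The group of 1-cocycles `G → A` (nonabelian convention `f (g*h) = g • f h + f g`). -/
def cocycles (A : Type) [AddCommGroup A] [DistribMulAction G A] : AddSubgroup (G → A) where
  carrier := {f | ∀ g h : G, f (g * h) = g • f h + f g}
  zero_mem' := by intro g h; simp
  add_mem' := by
    intro f₁ f₂ h₁ h₂ g h
    simp only [Pi.add_apply, h₁ g h, h₂ g h, smul_add]
    abel
  neg_mem' := by
    intro f hf g h
    simp only [Pi.neg_apply, hf g h, smul_neg]
    abel

theorem mem_cocycles {A : Type} [AddCommGroup A] [DistribMulAction G A] {f : G → A} :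
    f ∈ cocycles G A ↔ ∀ g h : G, f (g * h) = g • f h + f g := Iff.rfl

/-- The subgroup of 1-coboundaries inside the 1-cocycles. -/
def coboundaries (A : Type) [AddCommGroup A] [DistribMulAction G A] :
    AddSubgroup (cocycles G A) where
  carrier := {f | ∃ a : A, ∀ g : G, (f : G → A) g = g • a - a}
  zero_mem' := ⟨0, by simp⟩
  add_mem' := by
    rintro f₁ f₂ ⟨a, ha⟩ ⟨b, hb⟩
    refine ⟨a + b, fun g => ?_⟩
    simp only [AddSubgroup.coe_add, Pi.add_apply, ha g, hb g, smul_add]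
    abel
  neg_mem' := by
    rintro f ⟨a, ha⟩
    refine ⟨-a, fun g => ?_⟩
    simp only [AddSubgroup.coe_neg, Pi.neg_apply, ha g, smul_neg]
    abel

/-- First group cohomology: 1-cocycles modulo 1-coboundaries. -/
def H1 (A : Type) [AddCommGroup A] [DistribMulAction G A] :=
  cocycles G A ⧸ coboundaries G A

instance (A : Type) [AddCommGroup A] [DistribMulAction G A] : AddCommGroup (H1 G A) :=
  inferInstanceAs (AddCommGroup (_ ⧸ _))

/-- The map on 1-cocycles induced by a `G`-equivariant additive map. -/
def cocyclesMap {A B : Type} [AddCommGroup A] [DistribMulAction G A]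
    [AddCommGroup B] [DistribMulAction G B]
    (φ : A →+ B) (hφ : ∀ (g : G) (a : A), φ (g • a) = g • φ a) :
    cocycles G A →+ cocycles G B where
  toFun f := ⟨fun g => φ ((f : G → A) g), by
    intro g h
    simp only [f.2 g h, map_add, hφ]⟩
  map_zero' := by
    apply Subtype.ext
    funext g
    simp
  map_add' f₁ f₂ := by
    apply Subtype.ext
    funext g
    simp

/-- The map on first cohomology induced by a `G`-equivariant additive map. -/
def H1Map {A B : Type} [AddCommGroup A] [DistribMulAction G A]
    [AddCommGroup B] [DistribMulAction G B]
    (φ : A →+ B) (hφ : ∀ (g : G) (a : A), φ (g • a) = g • φ a) :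
    H1 G A →+ H1 G B :=
  QuotientAddGroup.map _ _ (cocyclesMap G φ hφ) (by
    rintro f ⟨a, ha⟩
    exact ⟨φ a, fun g => by simp [cocyclesMap, ha g, hφ]⟩)

/-- The 2-torsion subgroup `A[2] = {a : 2a = 0}`. -/
def twoTorsion (A : Type) [AddCommGroup A] : AddSubgroup A where
  carrier := {a | 2 • a = 0}
  zero_mem' := by simp
  add_mem' := by
    intro a b ha hb
    simp only [Set.mem_setOf_eq] at *
    rw [smul_add, ha, hb, add_zero]
  neg_mem' := by
    intro a ha
    simp only [Set.mem_setOf_eq] at *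
    rw [smul_neg, ha, neg_zero]

theorem mem_twoTorsion {A : Type} [AddCommGroup A] {a : A} :
    a ∈ twoTorsion A ↔ 2 • a = 0 := Iff.rfl

instance twoTorsionAction (A : Type) [AddCommGroup A] [DistribMulAction G A] :
    DistribMulAction G (twoTorsion A) where
  smul g a := ⟨g • (a : A), by
    have ha : 2 • (a : A) = 0 := a.2
    show 2 • (g • (a : A)) = 0
    rw [← smul_comm g (2 : ℕ) (a : A), ha, smul_zero]⟩
  one_smul a := Subtype.ext (one_smul G (a : A))
  mul_smul g h a := Subtype.ext (mul_smul g h (a : A))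
  smul_zero g := Subtype.ext (smul_zero g)
  smul_add g a b := Subtype.ext (smul_add g (a : A) (b : A))

@[simp] theorem twoTorsion_coe_smul {A : Type} [AddCommGroup A] [DistribMulAction G A]
    (g : G) (a : twoTorsion A) : ((g • a : twoTorsion A) : A) = g • (a : A) := rfl

/-- The subgroup of `G`-invariants of `A`. -/
def invariants (A : Type) [AddCommGroup A] [DistribMulAction G A] : AddSubgroup A where
  carrier := {a | ∀ g : G, g • a = a}
  zero_mem' := fun g => smul_zero g
  add_mem' := by
    intro a b ha hb g
    rw [smul_add, ha g, hb g]
  neg_mem' := by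
    intro a ha g
    rw [smul_neg, ha g]

theorem mem_invariants {A : Type} [AddCommGroup A] [DistribMulAction G A] {a : A} :
    a ∈ invariants G A ↔ ∀ g : G, g • a = a := Iff.rfl


/-! Since `ε` takes values `±1` and `-a = a` on `A[2]`, the group `I` acts trivially on `A[2]`,
so 1-cocycles into `A[2]` are homomorphisms. A class `f` dies in `H¹(I, A)` iff
`f g = g • b - b = (ε g - 1) • b` for some `b : A`; such an `f` vanishes on `J = ker ε`.
Conversely, if `f` vanishes on `J` it is constant on the other coset `s J`, and 2-divisibility
gives `b` with `2 • b = f s`, so that `f` is the coboundary of `-b`. -/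

theorem units_int_smul_eq_self_of_two_nsmul_eq_zero {A : Type} [AddCommGroup A] (u : ℤˣ) {a : A}
    (ha : 2 • a = 0) : (u : ℤ) • a = a := by
  rcases Int.units_eq_one_or u with rfl | rfl
  · simp
  · rw [two_nsmul] at ha
    simpa using neg_eq_of_add_eq_zero_left ha

theorem mem_cocycles_iff_of_smul_eq_self {A : Type} [AddCommGroup A] [DistribMulAction G A]
    (htriv : ∀ (g : G) (a : A), g • a = a) (f : G → A) :
    f ∈ cocycles G A ↔ ∀ g h : G, f (g * h) = f g + f h := by
  simp only [mem_cocycles, htriv, add_comm]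

theorem mk_mem_ker_H1Map_iff {A B : Type} [AddCommGroup A] [DistribMulAction G A]
    [AddCommGroup B] [DistribMulAction G B]
    (φ : A →+ B) (hφ : ∀ (g : G) (a : A), φ (g • a) = g • φ a) (f : cocycles G A) :
    (QuotientAddGroup.mk f : H1 G A) ∈ (H1Map G φ hφ).ker ↔
      ∃ b : B, ∀ g : G, φ ((f : G → A) g) = g • b - b :=
  AddMonoidHom.mem_ker.trans (QuotientAddGroup.eq_zero_iff _)

theorem apply_eq_of_map_eq {M H : Type} [AddCommMonoid M] [Group H] {f : G → M}
    (hf : ∀ g h : G, f (g * h) = f g + f h) (ε : G →* H) (hker : ∀ g ∈ ε.ker, f g = 0)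
    {g s : G} (hgs : ε g = ε s) : f g = f s := by
  have hmem : s⁻¹ * g ∈ ε.ker := by simp [MonoidHom.mem_ker, hgs]
  rw [← mul_inv_cancel_left s g, hf, hker _ hmem, add_zero]

section SignAction

variable {I : Type} [Group I] {ε : I →* ℤˣ} {A : Type} [AddCommGroup A] [DistribMulAction I A]

theorem smul_twoTorsion_eq_self (hact : ∀ (g : I) (a : A), g • a = (ε g : ℤ) • a)
    (g : I) (a : twoTorsion A) : g • a = a :=
  Subtype.ext <| (hact g a).trans <|
    units_int_smul_eq_self_of_two_nsmul_eq_zero (ε g) (mem_twoTorsion.mp a.2)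

theorem smul_sub_self_of_mem_ker (hact : ∀ (g : I) (a : A), g • a = (ε g : ℤ) • a)
    {g : I} (hg : g ∈ ε.ker) (b : A) : g • b - b = 0 := by
  rw [hact, MonoidHom.mem_ker.mp hg, Units.val_one, one_smul, sub_self]

theorem smul_neg_sub_neg_of_eq_neg_one (hact : ∀ (g : I) (a : A), g • a = (ε g : ℤ) • a)
    {g : I} (hg : ε g = -1) (b : A) : g • -b - -b = 2 • b := by
  rw [hact, hg, Units.val_neg, Units.val_one, neg_one_smul, neg_neg, sub_neg_eq_add, two_nsmul]

end SignAction

/-- Let `ε : I → {±1}` be a surjective homomorphism with kernel `J`, acting on a 2-divisible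
abelian group `A` by `g • a = ε(g) • a`.  Then `I` acts trivially on `A[2]` (so
`H¹(I, A[2]) = Hom(I, A[2])`, i.e. the 1-cocycles are exactly the homomorphisms), and under
this identification the kernel of the natural map `H¹(I, A[2]) → H¹(I, A)` consists exactly
of the homomorphisms `I → A[2]` vanishing on `J`. -/
theorem statement7 (I : Type) [Group I] (ε : I →* ℤˣ) (hsurj : Function.Surjective ε)
    (A : Type) [AddCommGroup A] [DistribMulAction I A]
    (hact : ∀ (g : I) (a : A), g • a = (ε g : ℤ) • a)
    (hdiv : ∀ a : A, ∃ b : A, 2 • b = a) :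
    (∀ (g : I) (a : twoTorsion A), g • a = a) ∧
    (∀ f : I → twoTorsion A,
      f ∈ cocycles I (twoTorsion A) ↔ ∀ g h : I, f (g * h) = f g + f h) ∧
    (∀ f : cocycles I (twoTorsion A),
      (QuotientAddGroup.mk f : H1 I (twoTorsion A)) ∈
          (H1Map I (twoTorsion A).subtype (fun _ _ => rfl)).ker ↔
        ∀ g ∈ ε.ker, (f : I → twoTorsion A) g = 0) := by
  have htriv := smul_twoTorsion_eq_self hact
  refine ⟨htriv, mem_cocycles_iff_of_smul_eq_self I htriv, fun f => ?_⟩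
  have hhom := (mem_cocycles_iff_of_smul_eq_self I htriv _).mp f.2
  refine (mk_mem_ker_H1Map_iff I _ _ f).trans ⟨?_, ?_⟩
  · rintro ⟨b, hb⟩ g hg
    exact Subtype.ext ((hb g).trans (smul_sub_self_of_mem_ker hact hg b))
  · intro hvan
    obtain ⟨s, hs⟩ := hsurj (-1)
    obtain ⟨b, hb⟩ := hdiv ((f : I → twoTorsion A) s)
    refine ⟨-b, fun g => ?_⟩
    rcases Int.units_eq_one_or (ε g) with hg | hg
    · rw [hvan g hg, smul_sub_self_of_mem_ker hact hg]
      rfl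
    · rw [apply_eq_of_map_eq I hhom ε hvan (hg.trans hs.symm),
        smul_neg_sub_neg_of_eq_neg_one hact hg, hb]
      rfl

end SelmerCompanion
end
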